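/- arXiv:1705.10661 — 2 statements merged into one kernel-verified Lean document; each statement's English description precedes it below -/
import Mathlib

section
/- Quadratic implicit function theorem: Let ‖·‖ be a norm on ℂ^d, let A be an invertible linear map on ℂ^d, B a linear map on ℂ^d, and Q : ℂ^d × ℂ^d → ℂ^d a bounded bilinear map with ‖Q‖ = sup_{x,y≠0} ‖Q(x,y)‖/(‖x‖‖y‖) < ∞. Set ε₂ = (2‖A⁻¹‖‖Q‖)⁻¹ and ε₁ = ε₂·(2‖A⁻¹‖‖B‖)⁻¹. Then there exists a unique function X : B_{ε₁}(0) → B_{ε₂}(0) such that A·X(d) + Q(X(d), X(d)) = B·d for all d with ‖d‖ < ε₁; moreover X satisfies the Lipschitz bound ‖X(d₁) - X(d₂)‖ ≤ 2‖A⁻¹‖‖B‖·‖d₁ - d₂‖ for all d₁, d₂ with ‖dᵢ‖ < ε₁/2. -/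
/-!
Solutions of `A x + Q x x = B d` are the fixed points of `x ↦ A⁻¹ (B d - Q x x)`. The identity
`Q x x - Q y y = Q x (x - y) + Q (x - y) y` makes this map `2‖A⁻¹‖‖Q‖r`-Lipschitz on the ball of
radius `r`; for `2‖A⁻¹‖‖B‖‖d‖ ≤ r < ε₂` it is a contraction of that ball into itself, and Banach's
fixed point theorem gives a solution. The same identity, applied to solutions `x`, `y` for `d₁`, `d₂`,
gives `(1 - ‖A⁻¹‖‖Q‖(‖x‖ + ‖y‖)) ‖x - y‖ ≤ ‖A⁻¹‖‖B‖‖d₁ - d₂‖`: uniqueness below radius `ε₂`, and the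
Lipschitz bound below radius `ε₂ / 2`.
-/

open Metric Set Function

namespace ContinuousLinearMap

variable {𝕜 E F : Type*} [NontriviallyNormedField 𝕜] [NormedAddCommGroup E] [NormedSpace 𝕜 E]
  [NormedAddCommGroup F] [NormedSpace 𝕜 F]

theorem norm_apply_self_sub_apply_self_le (Q : E →L[𝕜] E →L[𝕜] F) (x y : E) :
    ‖Q x x - Q y y‖ ≤ ‖Q‖ * (‖x‖ + ‖y‖) * ‖x - y‖ := by
  have hsplit : Q x x - Q y y = Q x (x - y) + Q (x - y) y := by
    simp only [map_sub, sub_apply]; abel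
  calc ‖Q x x - Q y y‖ ≤ ‖Q x (x - y)‖ + ‖Q (x - y) y‖ := hsplit ▸ norm_add_le _ _
    _ ≤ ‖Q‖ * ‖x‖ * ‖x - y‖ + ‖Q‖ * ‖x - y‖ * ‖y‖ :=
      add_le_add (Q.le_opNorm₂ _ _) (Q.le_opNorm₂ _ _)
    _ = ‖Q‖ * (‖x‖ + ‖y‖) * ‖x - y‖ := by ring

end ContinuousLinearMap

namespace QuadraticEquation

variable {𝕜 E : Type*} [NontriviallyNormedField 𝕜] [NormedAddCommGroup E] [NormedSpace 𝕜 E]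
  (A : E ≃L[𝕜] E) (B : E →L[𝕜] E) (Q : E →L[𝕜] E →L[𝕜] E)

def fixedPointMap (d x : E) : E := A.symm (B d - Q x x)

variable {A B Q}

theorem isFixedPt_fixedPointMap_iff {d x : E} :
    IsFixedPt (fixedPointMap A B Q d) x ↔ A x + Q x x = B d := by
  rw [IsFixedPt, fixedPointMap, A.symm_apply_eq, sub_eq_iff_eq_add, eq_comm]

theorem fixedPointMap_sub (d x y : E) :
    fixedPointMap A B Q d x - fixedPointMap A B Q d y = A.symm (Q y y - Q x x) := by
  rw [fixedPointMap, fixedPointMap, ← map_sub, sub_sub_sub_cancel_left]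

theorem norm_fixedPointMap_le (d x : E) :
    ‖fixedPointMap A B Q d x‖ ≤ ‖(A.symm : E →L[𝕜] E)‖ * (‖B‖ * ‖d‖ + ‖Q‖ * ‖x‖ * ‖x‖) :=
  calc ‖fixedPointMap A B Q d x‖ ≤ ‖(A.symm : E →L[𝕜] E)‖ * ‖B d - Q x x‖ :=
        (A.symm : E →L[𝕜] E).le_opNorm _
    _ ≤ ‖(A.symm : E →L[𝕜] E)‖ * (‖B‖ * ‖d‖ + ‖Q‖ * ‖x‖ * ‖x‖) := by
        gcongr
        exact (norm_sub_le _ _).trans (add_le_add (B.le_opNorm d) (Q.le_opNorm₂ x x))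

theorem mapsTo_fixedPointMap_closedBall {d : E} {r : ℝ}
    (hr : 2 * ‖(A.symm : E →L[𝕜] E)‖ * ‖B‖ * ‖d‖ ≤ r)
    (hK : 2 * ‖(A.symm : E →L[𝕜] E)‖ * ‖Q‖ * r < 1) :
    MapsTo (fixedPointMap A B Q d) (closedBall 0 r) (closedBall 0 r) := by
  intro x hx
  rw [mem_closedBall_zero_iff] at hx ⊢
  have hr0 : 0 ≤ r := (by positivity : (0 : ℝ) ≤ _).trans hr
  have hxx : ‖x‖ * ‖x‖ ≤ r * r := mul_self_le_mul_self (norm_nonneg x) hx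
  have hQxx := mul_le_mul_of_nonneg_left hxx
    (mul_nonneg (norm_nonneg (A.symm : E →L[𝕜] E)) (norm_nonneg Q))
  nlinarith [norm_fixedPointMap_le (A := A) (B := B) (Q := Q) d x,
    mul_le_mul_of_nonneg_right hK.le hr0]

theorem lipschitzOnWith_fixedPointMap_closedBall (d : E) (r : ℝ) :
    LipschitzOnWith (2 * ‖(A.symm : E →L[𝕜] E)‖ * ‖Q‖ * r).toNNReal (fixedPointMap A B Q d)
      (closedBall 0 r) := by
  refine LipschitzOnWith.of_dist_le' fun x hx y hy => ?_
  rw [mem_closedBall_zero_iff] at hx hy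
  rw [dist_eq_norm, dist_eq_norm, fixedPointMap_sub]
  calc ‖A.symm (Q y y - Q x x)‖ ≤ ‖(A.symm : E →L[𝕜] E)‖ * ‖Q y y - Q x x‖ :=
        (A.symm : E →L[𝕜] E).le_opNorm _
    _ ≤ ‖(A.symm : E →L[𝕜] E)‖ * (‖Q‖ * (r + r) * ‖x - y‖) := by
        gcongr
        rw [norm_sub_rev x y]
        exact (Q.norm_apply_self_sub_apply_self_le y x).trans (by gcongr)
    _ = 2 * ‖(A.symm : E →L[𝕜] E)‖ * ‖Q‖ * r * ‖x - y‖ := by ring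

theorem exists_solution_norm_le [CompleteSpace E] {d : E} {r : ℝ}
    (hr : 2 * ‖(A.symm : E →L[𝕜] E)‖ * ‖B‖ * ‖d‖ ≤ r)
    (hK : 2 * ‖(A.symm : E →L[𝕜] E)‖ * ‖Q‖ * r < 1) :
    ∃ x, ‖x‖ ≤ r ∧ A x + Q x x = B d := by
  have hr0 : 0 ≤ r := (by positivity : (0 : ℝ) ≤ _).trans hr
  have hmaps := mapsTo_fixedPointMap_closedBall hr hK
  have hcontr : ContractingWith _ (hmaps.restrict _ _ _) :=
    ⟨by simpa using hK, (lipschitzOnWith_fixedPointMap_closedBall d r).mapsToRestrict hmaps⟩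
  obtain ⟨x, hx, hfix, -⟩ := hcontr.exists_fixedPoint' isClosed_closedBall.isComplete hmaps
    (mem_closedBall_self hr0) (edist_ne_top _ _)
  exact ⟨x, mem_closedBall_zero_iff.mp hx, isFixedPt_fixedPointMap_iff.mp hfix⟩

theorem norm_sub_le_of_solution {d₁ d₂ x y : E}
    (hx : A x + Q x x = B d₁) (hy : A y + Q y y = B d₂) :
    ‖x - y‖ ≤ ‖(A.symm : E →L[𝕜] E)‖ * (‖B‖ * ‖d₁ - d₂‖ + ‖Q‖ * (‖x‖ + ‖y‖) * ‖x - y‖) := by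
  have hxy : x - y = A.symm (B (d₁ - d₂) - (Q x x - Q y y)) := by
    rw [A.eq_symm_apply, map_sub, map_sub, ← hx, ← hy]; abel
  calc ‖x - y‖ ≤ ‖(A.symm : E →L[𝕜] E)‖ * ‖B (d₁ - d₂) - (Q x x - Q y y)‖ :=
        hxy ▸ (A.symm : E →L[𝕜] E).le_opNorm _
    _ ≤ _ := by
        gcongr
        exact (norm_sub_le _ _).trans
          (add_le_add (B.le_opNorm _) (Q.norm_apply_self_sub_apply_self_le x y))

section Radius

variable {ε : ℝ} (hε : 2 * ‖(A.symm : E →L[𝕜] E)‖ * ‖Q‖ * ε = 1)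
include hε

theorem exists_solution_of_lt_radius [CompleteSpace E] {d : E}
    (hd : 2 * ‖(A.symm : E →L[𝕜] E)‖ * ‖B‖ * ‖d‖ < ε) :
    ∃ x, ‖x‖ ≤ 2 * ‖(A.symm : E →L[𝕜] E)‖ * ‖B‖ * ‖d‖ ∧ A x + Q x x = B d :=
  have hk : 0 < 2 * ‖(A.symm : E →L[𝕜] E)‖ * ‖Q‖ :=
    (by positivity : (0 : ℝ) ≤ _).lt_of_ne (left_ne_zero_of_mul_eq_one hε).symm
  exists_solution_norm_le le_rfl (hε ▸ mul_lt_mul_of_pos_left hd hk)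

theorem solution_unique_of_norm_lt {d x y : E} (hxε : ‖x‖ < ε) (hyε : ‖y‖ < ε)
    (hx : A x + Q x x = B d) (hy : A y + Q y y = B d) : x = y := by
  have hk : 0 < ‖(A.symm : E →L[𝕜] E)‖ * ‖Q‖ :=
    (by positivity : (0 : ℝ) ≤ _).lt_of_ne fun h => by simp [mul_assoc, ← h] at hε
  have hcontr : ‖(A.symm : E →L[𝕜] E)‖ * ‖Q‖ * (‖x‖ + ‖y‖) < 1 := by
    nlinarith [mul_lt_mul_of_pos_left (add_lt_add hxε hyε) hk]
  have hxy := norm_sub_le_of_solution hx hy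
  rw [sub_self, norm_zero, mul_zero, zero_add] at hxy
  rw [← sub_eq_zero, ← norm_le_zero_iff]
  nlinarith [norm_nonneg (x - y)]

theorem norm_sub_le_of_norm_le_half_radius {d₁ d₂ x y : E} (hxε : ‖x‖ ≤ ε / 2)
    (hyε : ‖y‖ ≤ ε / 2) (hx : A x + Q x x = B d₁) (hy : A y + Q y y = B d₂) :
    ‖x - y‖ ≤ 2 * ‖(A.symm : E →L[𝕜] E)‖ * ‖B‖ * ‖d₁ - d₂‖ := by
  have hhalf : ‖(A.symm : E →L[𝕜] E)‖ * ‖Q‖ * (‖x‖ + ‖y‖) ≤ 1 / 2 := by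
    nlinarith [mul_le_mul_of_nonneg_left (add_le_add hxε hyε)
      (by positivity : (0 : ℝ) ≤ ‖(A.symm : E →L[𝕜] E)‖ * ‖Q‖)]
  nlinarith [norm_sub_le_of_solution hx hy,
    mul_le_mul_of_nonneg_right hhalf (norm_nonneg (x - y))]

end Radius

theorem radii_of_pos {ε₁ ε₂ : ℝ} (hε₂ : ε₂ = (2 * ‖(A.symm : E →L[𝕜] E)‖ * ‖Q‖)⁻¹)
    (hε₁ : ε₁ = ε₂ * (2 * ‖(A.symm : E →L[𝕜] E)‖ * ‖B‖)⁻¹) (hε₁0 : 0 < ε₁) :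
    2 * ‖(A.symm : E →L[𝕜] E)‖ * ‖Q‖ * ε₂ = 1 ∧ 0 < 2 * ‖(A.symm : E →L[𝕜] E)‖ * ‖B‖ ∧
      2 * ‖(A.symm : E →L[𝕜] E)‖ * ‖B‖ * ε₁ = ε₂ := by
  obtain ⟨hε₂0, hc⟩ := (pos_and_pos_or_neg_and_neg_of_mul_pos (hε₁ ▸ hε₁0)).resolve_right
    fun h => (hε₂ ▸ h.1).not_ge (by positivity)
  refine ⟨hε₂ ▸ mul_inv_cancel₀ (inv_pos.mp (hε₂ ▸ hε₂0)).ne', inv_pos.mp hc, ?_⟩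
  rw [hε₁, mul_left_comm, mul_inv_cancel₀ (inv_pos.mp hc).ne', mul_one]

end QuadraticEquation

open QuadraticEquation in
/-- **Quadratic implicit function theorem.** With `A` an invertible linear map,
`B` linear, `Q` a bounded bilinear map on a finite-dimensional complex normed space,
and `ε₂ = (2‖A⁻¹‖‖Q‖)⁻¹`, `ε₁ = ε₂ (2‖A⁻¹‖‖B‖)⁻¹`, there exists a unique
`X : B_{ε₁}(0) → B_{ε₂}(0)` with `A X(d) + Q(X(d), X(d)) = B d`, which moreover
is Lipschitz with constant `2‖A⁻¹‖‖B‖` on the ball of radius `ε₁/2`. -/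
theorem quadratic_implicit_function_theorem {E : Type*} [NormedAddCommGroup E]
    [NormedSpace ℂ E] [FiniteDimensional ℂ E]
    (A : E ≃L[ℂ] E) (B : E →L[ℂ] E) (Q : E →L[ℂ] E →L[ℂ] E)
    (ε₁ ε₂ : ℝ)
    (hε₂ : ε₂ = (2 * ‖(A.symm : E →L[ℂ] E)‖ * ‖Q‖)⁻¹)
    (hε₁ : ε₁ = ε₂ * (2 * ‖(A.symm : E →L[ℂ] E)‖ * ‖B‖)⁻¹) :
    ∃ X : E → E,
      (∀ d, ‖d‖ < ε₁ → ‖X d‖ < ε₂ ∧ A (X d) + Q (X d) (X d) = B d) ∧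
      (∀ X' : E → E,
          (∀ d, ‖d‖ < ε₁ → ‖X' d‖ < ε₂ ∧ A (X' d) + Q (X' d) (X' d) = B d) →
          ∀ d, ‖d‖ < ε₁ → X' d = X d) ∧
      ∀ d₁ d₂, ‖d₁‖ < ε₁ / 2 → ‖d₂‖ < ε₁ / 2 →
        ‖X d₁ - X d₂‖ ≤ 2 * ‖(A.symm : E →L[ℂ] E)‖ * ‖B‖ * ‖d₁ - d₂‖ := by
  have : CompleteSpace E := FiniteDimensional.complete ℂ E
  rcases le_or_gt ε₁ 0 with hε₁0 | hε₁0
  · have hempty : ∀ (d : E) {t : ℝ}, t ≤ 0 → ¬‖d‖ < t := fun d _ ht hd =>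
      (norm_nonneg d).not_gt (hd.trans_le ht)
    exact ⟨0, fun d hd => (hempty d hε₁0 hd).elim, fun _ _ d hd => (hempty d hε₁0 hd).elim,
      fun d _ hd _ => (hempty d (by linarith) hd).elim⟩
  obtain ⟨hε₂', hc, hε₁'⟩ := radii_of_pos hε₂ hε₁ hε₁0
  have hsol : ∀ d, ∃ x, ‖d‖ < ε₁ →
      ‖x‖ ≤ 2 * ‖(A.symm : E →L[ℂ] E)‖ * ‖B‖ * ‖d‖ ∧ A x + Q x x = B d := fun d =>
    if hd : ‖d‖ < ε₁ then
      (exists_solution_of_lt_radius hε₂' (hε₁' ▸ mul_lt_mul_of_pos_left hd hc)).imp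
        fun _ hx _ => hx
    else ⟨0, fun h => (hd h).elim⟩
  choose X hX using hsol
  have hXlt : ∀ d, ‖d‖ < ε₁ → ‖X d‖ < ε₂ := fun d hd =>
    (hX d hd).1.trans_lt (hε₁' ▸ mul_lt_mul_of_pos_left hd hc)
  have hXhalf : ∀ d, ‖d‖ < ε₁ / 2 → ‖X d‖ ≤ ε₂ / 2 := fun d hd =>
    (hX d (by linarith)).1.trans (by nlinarith)
  exact ⟨X, fun d hd => ⟨hXlt d hd, (hX d hd).2⟩,
    fun X' hX' d hd =>
      solution_unique_of_norm_lt hε₂' (hX' d hd).1 (hXlt d hd) (hX' d hd).2 (hX d hd).2,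
    fun d₁ d₂ hd₁ hd₂ => norm_sub_le_of_norm_le_half_radius hε₂' (hXhalf d₁ hd₁)
      (hXhalf d₂ hd₂) (hX d₁ (by linarith)).2 (hX d₂ (by linarith)).2⟩
end

section
/- Cumulant summation identity: for a finite multiset X' of random variables with finite moments, |X'| · E[∏X'] = ∑_{X'' ⊆ X'} |X''| · E[∏(X' \ X'')] · κ(X''), where the sum is over all sub-multisets X'' of X', ∏X denotes the product of the elements of X, and κ denotes the joint cumulant. -/
/-!
Expand every cumulant `κ(S)` over the set partitions `P` of `S`. For `S ≠ X'`, adjoining `Sᶜ` as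
an extra block turns `(S, P)` into a partition `Q` of `X'` with a marked block `B = Sᶜ`, and
every such pair arises exactly once. Since `∑_{B ∈ Q} |Bᶜ| = n(|Q| - 1)`, and the term `S = X'`
contributes `n c_{|Q|}`, each partition `Q` of `X'` enters the right-hand side with the weight
`n((|Q| - 1) c_{|Q|-1} + c_{|Q|}) ∏_{B ∈ Q} E[∏B]`, where `c_k = (-1)^{k-1}(k-1)!`.
As `c_{k+1} = -k c_k`, this weight vanishes unless `Q = {X'}`, which leaves `n E[∏X']`.
-/

open MeasureTheory

/-- `P` is a set partition of the finset `s`: its blocks are nonempty subsets of `s`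
and every element of `s` lies in exactly one block. -/
def IsPartitionOn {ι : Type*} (s : Finset ι) (P : Finset (Finset ι)) : Prop :=
  (∀ B ∈ P, B.Nonempty ∧ B ⊆ s) ∧ ∀ i ∈ s, ∃! B, B ∈ P ∧ i ∈ B

open Classical in
/-- The joint cumulant of the family `(X i)_{i ∈ s}` defined by the set-partition
Möbius formula `κ = ∑_P (-1)^{|P|-1}(|P|-1)! ∏_{B ∈ P} E[∏_{i ∈ B} X_i]`. -/
noncomputable def cumulantOn {Ω : Type*} [MeasurableSpace Ω] (μ : Measure Ω)
    {ι : Type*} [Fintype ι] (s : Finset ι) (X : ι → Ω → ℂ) : ℂ :=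
  ∑ P ∈ Finset.univ.filter (IsPartitionOn s),
    (-1 : ℂ) ^ (P.card - 1) * (Nat.factorial (P.card - 1) : ℂ) *
      ∏ B ∈ P, ∫ ω, ∏ i ∈ B, X i ω ∂μ

open Finset

theorem isPartitionOn_singleton {ι : Type*} {s : Finset ι} (hs : s.Nonempty) :
    IsPartitionOn s {s} :=
  ⟨fun B hB => by rw [mem_singleton.1 hB]; exact ⟨hs, Subset.rfl⟩,
    fun i hi => ⟨s, ⟨mem_singleton_self s, hi⟩, fun _ hC => mem_singleton.1 hC.1⟩⟩

namespace IsPartitionOn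

variable {ι : Type*} {s t : Finset ι} {P : Finset (Finset ι)}

theorem eq_of_mem_of_mem (hP : IsPartitionOn s P) {B C : Finset ι} {i : ι} (hB : B ∈ P)
    (hC : C ∈ P) (hiB : i ∈ B) (hiC : i ∈ C) : B = C :=
  (hP.2 i ((hP.1 B hB).2 hiB)).unique ⟨hB, hiB⟩ ⟨hC, hiC⟩

theorem sum_card [DecidableEq ι] (hP : IsPartitionOn s P) : ∑ B ∈ P, B.card = s.card := by
  have hdisj : (P : Set (Finset ι)).PairwiseDisjoint id := fun B hB C hC hne =>
    disjoint_left.2 fun _ hiB hiC => hne (hP.eq_of_mem_of_mem hB hC hiB hiC)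
  have hcover : P.biUnion id = s := by
    ext i
    simp only [mem_biUnion, id]
    exact ⟨fun ⟨B, hB, hi⟩ => (hP.1 B hB).2 hi, fun hi => (hP.2 i hi).exists⟩
  rw [← hcover, card_biUnion hdisj]
  rfl

theorem card_eq_one_iff (hP : IsPartitionOn s P) : P.card = 1 ↔ P = {s} := by
  refine ⟨fun h => ?_, fun h => by rw [h, card_singleton]⟩
  obtain ⟨B, rfl⟩ := card_eq_one.1 h
  congr
  refine Subset.antisymm (hP.1 B (mem_singleton_self B)).2 fun i hi => ?_
  obtain ⟨C, ⟨hC, hiC⟩, -⟩ := hP.2 i hi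
  rwa [mem_singleton.1 hC] at hiC

theorem notMem_of_disjoint (hP : IsPartitionOn s P) (ht : t.Nonempty) (hst : Disjoint s t) :
    t ∉ P := fun htP =>
  let ⟨_, hi⟩ := ht
  disjoint_left.1 hst ((hP.1 t htP).2 hi) hi

theorem insert_of_disjoint [DecidableEq ι] (hP : IsPartitionOn s P) (ht : t.Nonempty)
    (hst : Disjoint s t) : IsPartitionOn (s ∪ t) (insert t P) := by
  refine ⟨fun B hB => ?_, fun i hi => ?_⟩
  · rcases mem_insert.1 hB with rfl | hB
    · exact ⟨ht, subset_union_right⟩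
    · exact ⟨(hP.1 B hB).1, (hP.1 B hB).2.trans subset_union_left⟩
  rcases mem_union.1 hi with his | hit
  · obtain ⟨B, ⟨hB, hiB⟩, huniq⟩ := hP.2 i his
    refine ⟨B, ⟨mem_insert_of_mem hB, hiB⟩, fun C ⟨hC, hiC⟩ => ?_⟩
    rcases mem_insert.1 hC with rfl | hC
    · exact absurd hiC (disjoint_left.1 hst his)
    · exact huniq C ⟨hC, hiC⟩
  · refine ⟨t, ⟨mem_insert_self t P, hit⟩, fun C ⟨hC, hiC⟩ => ?_⟩
    rcases mem_insert.1 hC with rfl | hC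
    · rfl
    · exact absurd hit (disjoint_left.1 hst ((hP.1 C hC).2 hiC))

theorem erase [DecidableEq ι] (hP : IsPartitionOn s P) {B : Finset ι} (hB : B ∈ P) :
    IsPartitionOn (s \ B) (P.erase B) := by
  refine ⟨fun C hC => ?_, fun i hi => ?_⟩
  · obtain ⟨hCB, hCP⟩ := mem_erase.1 hC
    exact ⟨(hP.1 C hCP).1, fun i hiC => mem_sdiff.2
      ⟨(hP.1 C hCP).2 hiC, fun hiB => hCB (hP.eq_of_mem_of_mem hCP hB hiC hiB)⟩⟩
  obtain ⟨his, hiB⟩ := mem_sdiff.1 hi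
  obtain ⟨C, ⟨hC, hiC⟩, huniq⟩ := hP.2 i his
  refine ⟨C, ⟨mem_erase.2 ⟨?_, hC⟩, hiC⟩, fun D ⟨hD, hiD⟩ => huniq D ⟨mem_of_mem_erase hD, hiD⟩⟩
  rintro rfl
  exact hiB hiC

end IsPartitionOn

section MomentCumulant

open Classical

variable {ι R : Type*} [Fintype ι] [DecidableEq ι] [CommRing R]

/-- The Möbius function `μ(P, 1̂)` of the partition lattice, for a partition `P` with `k` blocks. -/
def partitionCoeff (k : ℕ) : R := (-1) ^ (k - 1) * (Nat.factorial (k - 1) : R)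

theorem sub_one_mul_partitionCoeff_pred_add_partitionCoeff (k : ℕ) :
    ((k : R) - 1) * partitionCoeff (k - 1) + partitionCoeff k = if k = 1 then 1 else 0 := by
  rcases k with _ | _ | j
  · simp [partitionCoeff]
  · simp [partitionCoeff]
  · simp only [partitionCoeff, Nat.add_sub_cancel, Nat.factorial_succ, pow_succ]
    push_cast
    ring

noncomputable def cumulantOfMoments (m : Finset ι → R) (s : Finset ι) : R :=
  ∑ P ∈ univ.filter (IsPartitionOn s), partitionCoeff P.card * ∏ B ∈ P, m B

theorem sum_ne_univ_sum_isPartitionOn {M : Type*} [AddCommMonoid M]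
    (f : Finset ι → Finset (Finset ι) → M) :
    ∑ S ∈ univ.erase univ, ∑ P ∈ univ.filter (IsPartitionOn S), f S P =
      ∑ Q ∈ univ.filter (IsPartitionOn univ), ∑ B ∈ Q, f Bᶜ (Q.erase B) := by
  have compl_nonempty {S : Finset ι} (hS : S ∈ univ.erase univ) : Sᶜ.Nonempty :=
    nonempty_iff_ne_empty.2 fun h => ne_of_mem_erase hS ((compl_eq_empty_iff S).1 h)
  have erase_insert_compl {S : Finset ι} {P : Finset (Finset ι)} (hS : S ∈ univ.erase univ)
      (hP : IsPartitionOn S P) : (insert Sᶜ P).erase Sᶜ = P :=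
    erase_insert (hP.notMem_of_disjoint (compl_nonempty hS) disjoint_compl_right)
  rw [sum_sigma', sum_sigma']
  refine sum_nbij' (fun p => ⟨insert p.1ᶜ p.2, p.1ᶜ⟩) (fun q => ⟨q.2ᶜ, q.1.erase q.2⟩)
    ?_ ?_ ?_ ?_ ?_
  · rintro ⟨S, P⟩ hSP
    simp only [mem_sigma, mem_filter, mem_univ, true_and] at hSP ⊢
    refine ⟨?_, mem_insert_self _ _⟩
    simpa using hSP.2.insert_of_disjoint (compl_nonempty hSP.1) disjoint_compl_right
  · rintro ⟨Q, B⟩ hQB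
    simp only [mem_sigma, mem_filter, mem_univ, true_and, mem_erase, ne_eq, compl_eq_univ_iff,
      and_true] at hQB ⊢
    refine ⟨(hQB.1.1 B hQB.2).1.ne_empty, ?_⟩
    simpa [sdiff_eq_inter_compl] using hQB.1.erase hQB.2
  · rintro ⟨S, P⟩ hSP
    simp only [mem_sigma, mem_filter, mem_univ, true_and] at hSP
    simp [erase_insert_compl hSP.1 hSP.2]
  · rintro ⟨Q, B⟩ hQB
    simp only [mem_sigma] at hQB
    simp [insert_erase hQB.2]
  · rintro ⟨S, P⟩ hSP
    simp only [mem_sigma, mem_filter, mem_univ, true_and] at hSP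
    simp [erase_insert_compl hSP.1 hSP.2]

theorem sum_card_compl_mul_partitionCoeff_erase (m : Finset ι → R) {Q : Finset (Finset ι)}
    (hQ : IsPartitionOn univ Q) :
    ∑ B ∈ Q, (Bᶜ.card : R) * m B * (partitionCoeff (Q.erase B).card * ∏ C ∈ Q.erase B, m C) =
      Fintype.card ι * ((Q.card : R) - 1) * partitionCoeff (Q.card - 1) * ∏ C ∈ Q, m C := by
  have hterm : ∀ B ∈ Q, (Bᶜ.card : R) * m B *
      (partitionCoeff (Q.erase B).card * ∏ C ∈ Q.erase B, m C) =
      ((Fintype.card ι : R) - B.card) * (partitionCoeff (Q.card - 1) * ∏ C ∈ Q, m C) := by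
    intro B hB
    rw [card_erase_of_mem hB, ← mul_prod_erase Q m hB, card_compl,
      Nat.cast_sub (card_le_univ B)]
    ring
  have hcard : ∑ B ∈ Q, (B.card : R) = Fintype.card ι := by
    simpa using congrArg (Nat.cast (R := R)) hQ.sum_card
  rw [sum_congr rfl hterm, ← sum_mul, sum_sub_distrib, hcard, sum_const, nsmul_eq_mul]
  ring

theorem card_mul_moment_univ_eq_sum (m : Finset ι → R) (hm : m ∅ = 1) :
    (Fintype.card ι : R) * m univ = ∑ S, (S.card : R) * m Sᶜ * cumulantOfMoments m S := by
  set N : R := (Fintype.card ι : R)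
  have hweight : ∀ Q ∈ univ.filter (IsPartitionOn univ),
      ∑ B ∈ Q, (Bᶜ.card : R) * m B * (partitionCoeff (Q.erase B).card * ∏ C ∈ Q.erase B, m C) +
        N * (partitionCoeff Q.card * ∏ C ∈ Q, m C) =
      if Q = {univ} then N * m univ else 0 := by
    intro Q hQ
    have hQ := (mem_filter.1 hQ).2
    have hcoeff := sub_one_mul_partitionCoeff_pred_add_partitionCoeff (R := R) Q.card
    simp only [hQ.card_eq_one_iff] at hcoeff
    rw [sum_card_compl_mul_partitionCoeff_erase m hQ]
    split_ifs at hcoeff ⊢ with h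
    · subst h
      rw [prod_singleton]
      linear_combination N * m univ * hcoeff
    · linear_combination N * (∏ C ∈ Q, m C) * hcoeff
  calc N * m univ
      = ∑ Q ∈ univ.filter (IsPartitionOn univ), if Q = {univ} then N * m univ else 0 := by
        rcases isEmpty_or_nonempty ι with hι | hι
        · simp [N]
        · rw [sum_ite_eq']
          simp [isPartitionOn_singleton univ_nonempty]
    _ = ∑ Q ∈ univ.filter (IsPartitionOn univ),
          (∑ B ∈ Q, (Bᶜ.card : R) * m B *
              (partitionCoeff (Q.erase B).card * ∏ C ∈ Q.erase B, m C) +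
            N * (partitionCoeff Q.card * ∏ C ∈ Q, m C)) := (sum_congr rfl hweight).symm
    _ = ∑ S ∈ univ.erase univ, ∑ P ∈ univ.filter (IsPartitionOn S),
          (S.card : R) * m Sᶜ * (partitionCoeff P.card * ∏ B ∈ P, m B) +
        N * m ∅ * cumulantOfMoments m univ := by
        rw [sum_add_distrib, sum_ne_univ_sum_isPartitionOn, hm, mul_one, cumulantOfMoments,
          mul_sum]
        simp
    _ = ∑ S, (S.card : R) * m Sᶜ * cumulantOfMoments m S := by
        rw [← sum_erase_add _ _ (mem_univ univ), card_univ, compl_univ]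
        simp only [cumulantOfMoments, mul_sum, N]

end MomentCumulant

open Classical in
theorem cumulant_summation_identity_general {Ω : Type*} [MeasurableSpace Ω] (μ : Measure Ω)
    [IsProbabilityMeasure μ] {n : ℕ} (w : Fin n → Ω → ℂ) :
    (n : ℂ) * ∫ ω, ∏ i, w i ω ∂μ =
      ∑ S ∈ (Finset.univ : Finset (Fin n)).powerset,
        (S.card : ℂ) * (∫ ω, ∏ i ∈ Sᶜ, w i ω ∂μ) * cumulantOn μ S w := by
  have h := card_mul_moment_univ_eq_sum (fun B => ∫ ω, ∏ i ∈ B, w i ω ∂μ) (by simp)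
  rw [Fintype.card_fin] at h
  rw [powerset_univ, h]
  rfl

open Classical in
/-- **Cumulant summation identity**: for a finite family `X' = (w₁,…,w_n)`,
`|X'|·E[∏X'] = ∑_{X'' ⊆ X'} |X''|·E[∏(X'∖X'')]·κ(X'')`. -/
theorem cumulant_summation_identity {Ω : Type*} [MeasurableSpace Ω] (μ : Measure Ω)
    [IsProbabilityMeasure μ] {n : ℕ} (w : Fin n → Ω → ℂ)
    (hwm : ∀ i, Measurable (w i)) (hwb : ∃ C, ∀ i ω, ‖w i ω‖ ≤ C) :
    (n : ℂ) * ∫ ω, ∏ i, w i ω ∂μ =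
      ∑ S ∈ (Finset.univ : Finset (Fin n)).powerset,
        (S.card : ℂ) * (∫ ω, ∏ i ∈ Sᶜ, w i ω ∂μ) * cumulantOn μ S w :=
  cumulant_summation_identity_general μ w
end
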